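/- Let k, r ∈ ℤ₊ and let 𝒫^r : ℝ₊^k → ℝ₊^r be a map given by monomials with natural number exponents that is surjective and satisfies 𝒫^r(s ⊗ u) = 𝒫^r(s) ⊗ 𝒫^r(u) (coordinatewise products). If for some N ∈ ℤ₊ the set E_N := {𝒫^r(s) : s ∈ [2^{-N}, 2^N]^k} ∩ [1,2]^r has nonempty interior in [1,2]^r, then there exists N₀ ∈ ℤ₊ such that [1,2]^r ⊆ {𝒫^r(s) : s ∈ [2^{-N₀}, 2^{N₀}]^k}. -/

import Mathlib

/-!
Let `y = P s₀` be the centre of a relative ball of radius `ε` inside `E_N`, and pick `m` with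
`2 / m < ε`. For `z ∈ [1,2]^r` the point `y ⊗ (z / y)^{1/m}` stays in `[1,2]^r` and within `2 / m`
of `y`, so it equals `P s₁` with `s₁` in the `N`-box. Multiplicativity gives
`P (s₁ / s₀) = (z / y)^{1/m}`, hence `z = P (s₀ ⊗ (s₁ / s₀)^m)`, and `s₀ ⊗ (s₁ / s₀)^m` lies in the
box of size `N (2m + 1)`.
-/

open Set

/-- The set `E_N = {𝒫^r(s) : s ∈ [2^{-N}, 2^N]^k} ∩ [1,2]^r`. -/
def EN {k r : ℕ} (P : (Fin k → ℝ) → Fin r → ℝ) (N : ℕ) : Set (Fin r → ℝ) :=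
  {y | (∀ i, y i ∈ Set.Icc (1 : ℝ) 2) ∧
    ∃ s : Fin k → ℝ, (∀ j, s j ∈ Set.Icc ((2 : ℝ) ^ (-(N : ℤ))) ((2 : ℝ) ^ (N : ℤ))) ∧ P s = y}

theorem Real.abs_rpow_sub_one_le_of_mem_Icc {c p : ℝ} (hc : c ∈ Icc (2⁻¹ : ℝ) 2) (hp0 : 0 ≤ p)
    (hp1 : p ≤ 1) : |c ^ p - 1| ≤ p := by
  have h2 : (2 : ℝ) ^ p ≤ 1 + p := by
    simpa [one_add_one_eq_two] using
      rpow_one_add_le_one_add_mul_self (s := 1) (by norm_num) hp0 hp1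
  have h2pos : (0 : ℝ) < 2 ^ p := by positivity
  have hupper : c ^ p ≤ 1 + p := (rpow_le_rpow (by linarith [hc.1]) hc.2 hp0).trans h2
  have hlower : 1 - p ≤ c ^ p :=
    calc 1 - p ≤ (2 ^ p)⁻¹ := by
          rw [← one_div, le_div_iff₀ h2pos]
          nlinarith
      _ = (2⁻¹ : ℝ) ^ p := (inv_rpow (by norm_num) p).symm
      _ ≤ c ^ p := rpow_le_rpow (by norm_num) hc.1 hp0
  exact abs_sub_le_iff.2 ⟨by linarith, by linarith⟩

theorem Real.mul_div_rpow_eq_rpow_mul_rpow {y z : ℝ} (hy : 0 < y) (hz : 0 ≤ z) (p : ℝ) :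
    y * (z / y) ^ p = y ^ (1 - p) * z ^ p := by
  rw [div_rpow hz hy.le, rpow_sub hy, rpow_one]
  field_simp

theorem Real.mul_div_rpow_mem_Icc_one_two {y z p : ℝ} (hy : y ∈ Icc (1 : ℝ) 2)
    (hz : z ∈ Icc (1 : ℝ) 2) (hp0 : 0 ≤ p) (hp1 : p ≤ 1) : y * (z / y) ^ p ∈ Icc (1 : ℝ) 2 := by
  have hy0 : 0 ≤ y := by linarith [hy.1]
  have hz0 : 0 ≤ z := by linarith [hz.1]
  rw [mul_div_rpow_eq_rpow_mul_rpow (by linarith [hy.1]) hz0]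
  refine ⟨one_le_mul_of_one_le_of_one_le (one_le_rpow hy.1 (by linarith)) (one_le_rpow hz.1 hp0),
    ?_⟩
  calc y ^ (1 - p) * z ^ p ≤ 2 ^ (1 - p) * 2 ^ p :=
        mul_le_mul (rpow_le_rpow hy0 hy.2 (by linarith)) (rpow_le_rpow hz0 hz.2 hp0)
          (rpow_nonneg hz0 p) (by positivity)
    _ = 2 := by rw [← rpow_add two_pos, sub_add_cancel, rpow_one]

theorem Real.abs_mul_div_rpow_sub_le {y z p : ℝ} (hy : y ∈ Icc (1 : ℝ) 2) (hz : z ∈ Icc (1 : ℝ) 2)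
    (hp0 : 0 ≤ p) (hp1 : p ≤ 1) : |y * (z / y) ^ p - y| ≤ 2 * p := by
  have hy0 : 0 < y := by linarith [hy.1]
  have hzy : z / y ∈ Icc (2⁻¹ : ℝ) 2 := by
    constructor
    · rw [le_div_iff₀ hy0]; linarith [hz.1, hy.2]
    · rw [div_le_iff₀ hy0]; linarith [hz.2, hy.1]
  calc |y * (z / y) ^ p - y| = y * |(z / y) ^ p - 1| := by
        rw [← mul_sub_one, abs_mul, abs_of_pos hy0]
    _ ≤ 2 * p :=
        mul_le_mul hy.2 (abs_rpow_sub_one_le_of_mem_Icc hzy hp0 hp1) (abs_nonneg _) zero_le_two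

theorem mul_mem_Icc_zpow_neg_zpow {t x y : ℝ} {a b : ℤ} (ht : 0 < t)
    (hx : x ∈ Icc (t ^ (-a)) (t ^ a)) (hy : y ∈ Icc (t ^ (-b)) (t ^ b)) :
    x * y ∈ Icc (t ^ (-(a + b))) (t ^ (a + b)) := by
  have hx0 : 0 ≤ x := (zpow_pos ht _).le.trans hx.1
  have hy0 : 0 ≤ y := (zpow_pos ht _).le.trans hy.1
  rw [neg_add, zpow_add₀ ht.ne', zpow_add₀ ht.ne']
  exact ⟨mul_le_mul hx.1 hy.1 (zpow_pos ht _).le hx0, mul_le_mul hx.2 hy.2 hy0 (hx0.trans hx.2)⟩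

theorem inv_mem_Icc_zpow_neg_zpow {t x : ℝ} {a : ℤ} (ht : 0 < t)
    (hx : x ∈ Icc (t ^ (-a)) (t ^ a)) : x⁻¹ ∈ Icc (t ^ (-a)) (t ^ a) := by
  have hx0 : 0 < x := (zpow_pos ht _).trans_le hx.1
  have hupper := inv_anti₀ (zpow_pos ht (-a)) hx.1
  rw [zpow_neg, inv_inv] at hupper
  exact ⟨zpow_neg t a ▸ inv_anti₀ hx0 hx.2, hupper⟩

theorem div_mem_Icc_zpow_neg_zpow {t x y : ℝ} {a b : ℤ} (ht : 0 < t)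
    (hx : x ∈ Icc (t ^ (-a)) (t ^ a)) (hy : y ∈ Icc (t ^ (-b)) (t ^ b)) :
    x / y ∈ Icc (t ^ (-(a + b))) (t ^ (a + b)) :=
  mul_mem_Icc_zpow_neg_zpow ht hx (inv_mem_Icc_zpow_neg_zpow ht hy)

theorem pow_mem_Icc_zpow_neg_zpow {t x : ℝ} {a : ℤ} (ht : 0 < t)
    (hx : x ∈ Icc (t ^ (-a)) (t ^ a)) (n : ℕ) : x ^ n ∈ Icc (t ^ (-(n * a))) (t ^ (n * a)) := by
  induction n with
  | zero => simp
  | succ n ih =>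
    rw [pow_succ, Nat.cast_succ, add_one_mul]
    exact mul_mem_Icc_zpow_neg_zpow ht ih hx

section MultiplicativeMap

variable {ι κ : Type*} {P : (ι → ℝ) → κ → ℝ}

theorem map_mul_pow (hmul : ∀ s u : ι → ℝ, P (fun j => s j * u j) = fun i => P s i * P u i)
    (s u : ι → ℝ) (n : ℕ) : P (fun j => s j * u j ^ n) = fun i => P s i * P u i ^ n := by
  induction n with
  | zero => simp
  | succ n ih =>
    simp only [pow_succ, ← mul_assoc]
    rw [hmul (fun j => s j * u j ^ n) u, ih]

theorem map_div_mul (hmul : ∀ s u : ι → ℝ, P (fun j => s j * u j) = fun i => P s i * P u i)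
    (s₀ s₁ : ι → ℝ) (h : ∀ j, s₀ j ≠ 0) (i : κ) :
    P (fun j => s₁ j / s₀ j) i * P s₀ i = P s₁ i := by
  rw [← congrFun (hmul _ s₀) i]
  congr
  funext j
  exact div_mul_cancel₀ _ (h j)

theorem map_mul_div_pow (hmul : ∀ s u : ι → ℝ, P (fun j => s j * u j) = fun i => P s i * P u i)
    {s₀ s₁ : ι → ℝ} {w : κ → ℝ} (hs₀ : ∀ j, s₀ j ≠ 0) (hPs₀ : ∀ i, P s₀ i ≠ 0)
    (hPs₁ : P s₁ = fun i => P s₀ i * w i) (n : ℕ) :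
    P (fun j => s₀ j * (s₁ j / s₀ j) ^ n) = fun i => P s₀ i * w i ^ n := by
  have hPu : ∀ i, P (fun j => s₁ j / s₀ j) i = w i := fun i => by
    have h := map_div_mul hmul s₀ s₁ hs₀ i
    rw [hPs₁] at h
    exact mul_right_cancel₀ (hPs₀ i) (h.trans (mul_comm _ _))
  rw [map_mul_pow hmul]
  simp only [hPu]

end MultiplicativeMap

theorem stmt5_general (k r : ℕ)
    (P : (Fin k → ℝ) → Fin r → ℝ)
    (hmul : ∀ s u : Fin k → ℝ, P (fun j => s j * u j) = fun i => P s i * P u i)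
    (N : ℕ) (hN : 0 < N)
    (hint : ∃ y ∈ EN P N, ∃ ε > (0 : ℝ), ∀ z : Fin r → ℝ,
      (∀ i, z i ∈ Set.Icc (1 : ℝ) 2) → (∀ i, |z i - y i| < ε) → z ∈ EN P N) :
    ∃ N₀ : ℕ, 0 < N₀ ∧ ∀ y : Fin r → ℝ, (∀ i, y i ∈ Set.Icc (1 : ℝ) 2) →
      ∃ s : Fin k → ℝ,
        (∀ j, s j ∈ Set.Icc ((2 : ℝ) ^ (-(N₀ : ℤ))) ((2 : ℝ) ^ (N₀ : ℤ))) ∧ P s = y := by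
  obtain ⟨_, ⟨hy, s₀, hs₀, rfl⟩, ε, hε, hball⟩ := hint
  obtain ⟨n, hn⟩ := exists_nat_one_div_lt (half_pos hε)
  set m := n + 1
  have hp1 : (m : ℝ)⁻¹ ≤ 1 := inv_le_one_of_one_le₀ (Nat.one_le_cast.2 n.succ_pos)
  have hpε : 2 * (m : ℝ)⁻¹ < ε := by
    rw [← one_div]; push_cast [m]; linarith
  refine ⟨N + m * (N + N), by omega, fun z hz => ?_⟩
  have hPs₀ : ∀ i, 0 < P s₀ i := fun i => one_pos.trans_le (hy i).1
  obtain ⟨-, s₁, hs₁, hPs₁⟩ := hball (fun i => P s₀ i * (z i / P s₀ i) ^ (m : ℝ)⁻¹)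
    (fun i => Real.mul_div_rpow_mem_Icc_one_two (hy i) (hz i) (by positivity) hp1)
    (fun i => (Real.abs_mul_div_rpow_sub_le (hy i) (hz i) (by positivity) hp1).trans_lt hpε)
  refine ⟨fun j => s₀ j * (s₁ j / s₀ j) ^ m, fun j => ?_, ?_⟩
  · exact_mod_cast mul_mem_Icc_zpow_neg_zpow two_pos (hs₀ j)
      (pow_mem_Icc_zpow_neg_zpow two_pos (div_mem_Icc_zpow_neg_zpow two_pos (hs₁ j) (hs₀ j)) m)
  · rw [map_mul_div_pow hmul (fun j => ((zpow_pos two_pos _).trans_le (hs₀ j).1).ne')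
      (fun i => (hPs₀ i).ne') hPs₁ m]
    funext i
    rw [Real.rpow_inv_natCast_pow (div_nonneg (zero_le_one.trans (hz i).1) (hPs₀ i).le)
      n.succ_ne_zero, mul_div_cancel₀ _ (hPs₀ i).ne']

/-- If a surjective multiplicative monomial map `𝒫^r : ℝ₊^k → ℝ₊^r` is such that some
`E_N` has nonempty interior in `[1,2]^r`, then `[1,2]^r ⊆ {𝒫^r(s) : s ∈ [2^{-N₀}, 2^{N₀}]^k}`
for some `N₀ ∈ ℤ₊`. -/
theorem stmt5 (k r : ℕ) (hk : 0 < k) (hr : 0 < r)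
    (α : Fin r → Fin k → ℕ)
    (P : (Fin k → ℝ) → Fin r → ℝ)
    (hP : ∀ s i, P s i = ∏ j, s j ^ α i j)
    (hmul : ∀ s u : Fin k → ℝ, P (fun j => s j * u j) = fun i => P s i * P u i)
    (hsurj : ∀ y : Fin r → ℝ, (∀ i, 0 < y i) →
      ∃ s : Fin k → ℝ, (∀ j, 0 < s j) ∧ P s = y)
    (N : ℕ) (hN : 0 < N)
    (hint : ∃ y ∈ EN P N, ∃ ε > (0 : ℝ), ∀ z : Fin r → ℝ,
      (∀ i, z i ∈ Set.Icc (1 : ℝ) 2) → (∀ i, |z i - y i| < ε) → z ∈ EN P N) :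
    ∃ N₀ : ℕ, 0 < N₀ ∧ ∀ y : Fin r → ℝ, (∀ i, y i ∈ Set.Icc (1 : ℝ) 2) →
      ∃ s : Fin k → ℝ,
        (∀ j, s j ∈ Set.Icc ((2 : ℝ) ^ (-(N₀ : ℤ))) ((2 : ℝ) ^ (N₀ : ℤ))) ∧ P s = y :=
  stmt5_general k r P hmul N hN hint
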